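/- Let f : ℝ² → ℝ be a radially symmetric Schwartz function, i.e., f(x) = F(|x|) for some function F. Let u = R^⊥ f = (R₂ f, −R₁ f), where R_i = ∂_i Λ^{−1} are the Riesz transforms. Then u · ∇f = 0 pointwise on ℝ². -/

import Mathlib

open MeasureTheory FourierTransform Filter Real
open scoped ENNReal

noncomputable section

/-- The plane ℝ². -/
abbrev V2 : Type := EuclideanSpace ℝ (Fin 2)

/-- Fourier multiplier operator with symbol `m`. -/
def fmul (m : V2 → ℂ) (f : V2 → ℂ) : V2 → ℂ := 𝓕⁻ (fun ξ => m ξ * 𝓕 f ξ)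

/-- `Λ^a`, the Fourier multiplier with symbol `|ξ|^a`. -/
def lam (a : ℝ) (f : V2 → ℂ) : V2 → ℂ := fmul (fun ξ => ((‖ξ‖ ^ a : ℝ) : ℂ)) f

/-- `Λ^a` acting on real-valued functions. -/
def lamR (a : ℝ) (f : V2 → ℝ) : V2 → ℝ := fun x => (lam a (fun y => (f y : ℂ)) x).re

/-- The Riesz transform `R_i = ∂_i Λ^{-1}`, Fourier multiplier with symbol `-i ξ_i/|ξ|`. -/
def rz (i : Fin 2) (f : V2 → ℂ) : V2 → ℂ := fmul (fun ξ => -Complex.I * ((ξ i / ‖ξ‖ : ℝ) : ℂ)) f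

/-- Riesz transform acting on real-valued functions. -/
def rzR (i : Fin 2) (f : V2 → ℝ) : V2 → ℝ := fun x => (rz i (fun y => (f y : ℂ)) x).re

/-- The partial derivative `∂_i f`. -/
def pd (i : Fin 2) (f : V2 → ℝ) : V2 → ℝ := fun x => fderiv ℝ f x (EuclideanSpace.single i 1)

/-- `(R^⊥θ)·∇φ = (R₂θ)∂₁φ - (R₁θ)∂₂φ`. -/
def udg (θ φ : V2 → ℝ) : V2 → ℝ := fun x => rzR 1 θ x * pd 0 φ x - rzR 0 θ x * pd 1 φ x

/-- The fractional heat kernel `K_γ(t)`, with Fourier transform `exp(-|ξ|^γ t)`. -/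
def Kker (γ t : ℝ) : V2 → ℂ := 𝓕⁻ (fun ξ : V2 => ((Real.exp (-(‖ξ‖ ^ γ) * t) : ℝ) : ℂ))

/-- The fractional heat semigroup `e^{-tΛ^γ} f = K_γ(t) ∗ f`. -/
def heat (γ t : ℝ) (f : V2 → ℂ) : V2 → ℂ := fun x => ∫ y, Kker γ t (x - y) * f y

/-! Fix `x` and choose `p ≠ 0` orthogonal to `x`; let `A` be the reflection with `A x = x` and
`A p = -p`. A radial `f` is `A`-invariant. By the chain rule `∇f(x)` is then orthogonal to `p`.
The combination `p₁ R₁ + p₂ R₂` is the Fourier multiplier with symbol `-i ⟨ξ, p⟩ / |ξ|`, which is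
odd under `A`, while the Fourier transform commutes with `A`; so `(R₁f(x), R₂f(x))` is orthogonal
to `p` as well. Two vectors of the plane orthogonal to the same nonzero vector are parallel, so
`u · ∇f = R₂f ∂₁f - R₁f ∂₂f` vanishes at `x`. -/
open scoped RealInnerProductSpace

section

variable {E F : Type*} [NormedAddCommGroup E] [NormedSpace ℝ E]
  [NormedAddCommGroup F] [NormedSpace ℝ F]

theorem fderiv_apply_eq_zero_of_comp_eq {f : E → F} (A : E ≃L[ℝ] E) (hf : f ∘ A = f)
    {x v : E} (hx : A x = x) (hv : A v = -v) : fderiv ℝ f x v = 0 := by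
  have h := congrArg (· v) (A.comp_right_fderiv (f := f) (x := x))
  simp only [hf, ContinuousLinearMap.coe_comp, ContinuousLinearEquiv.coe_coe,
    Function.comp_apply, hx, hv, map_neg] at h
  have : IsAddTorsionFree F := .of_isTorsionFree ℝ F
  exact self_eq_neg.mp h

theorem comp_linearIsometryEquiv_eq_of_radial {α : Type*} {f : E → α} {F : ℝ → α}
    (hF : ∀ x, f x = F ‖x‖) (A : E ≃ₗᵢ[ℝ] E) : f ∘ A = f := by
  ext x
  simp [hF]

end

theorem exists_linearIsometryEquiv_apply_eq_self_and_neg {E : Type*} [NormedAddCommGroup E]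
    [InnerProductSpace ℝ E] [FiniteDimensional ℝ E] (hE : 2 ≤ Module.finrank ℝ E) (x : E) :
    ∃ (p : E) (A : E ≃ₗᵢ[ℝ] E), p ≠ 0 ∧ A x = x ∧ A p = -p := by
  have hperp : (ℝ ∙ x)ᗮ ≠ ⊥ := by
    intro h
    have := (ℝ ∙ x).finrank_add_finrank_orthogonal
    rw [h, finrank_bot] at this
    have : Module.finrank ℝ (ℝ ∙ x) ≤ 1 := (finrank_span_le_card {x}).trans (by simp)
    omega
  obtain ⟨p, hpx, hp⟩ := Submodule.exists_mem_ne_zero_of_ne_bot hperp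
  refine ⟨p, (ℝ ∙ p)ᗮ.reflection, hp, Submodule.reflection_mem_subspace_eq_self ?_,
    Submodule.reflection_orthogonalComplement_singleton_eq_neg p⟩
  rw [Submodule.mem_orthogonal_singleton_iff_inner_right] at hpx ⊢
  rwa [real_inner_comm]

theorem integrable_fourier_ofReal {E : Type*} [NormedAddCommGroup E] [InnerProductSpace ℝ E]
    [FiniteDimensional ℝ E] [MeasurableSpace E] [BorelSpace E] (f : SchwartzMap E ℝ) :
    Integrable (𝓕 fun y => (f y : ℂ)) :=
  (𝓕 (SchwartzMap.postcompCLM (𝕜 := ℝ) Complex.ofRealCLM f)).integrable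

section FourierMultiplier

variable {m m₁ m₂ g : V2 → ℂ}

theorem fmul_comp_linearIsometryEquiv (A : V2 ≃ₗᵢ[ℝ] V2) (x : V2) :
    fmul m g (A x) = fmul (m ∘ A) (g ∘ A) x := by
  simp only [fmul, ← Real.fourierInv_comp_linearIsometry A, Real.fourier_comp_linearIsometry A]
  rfl

theorem fmul_smul_symbol (c : ℂ) : fmul (c • m) g = c • fmul m g := by
  ext x
  simp only [fmul, Real.fourierInv_eq, Pi.smul_apply, smul_eq_mul, ← integral_const_mul]
  congr 1
  ext v
  rw [Circle.smul_def, Circle.smul_def, smul_eq_mul, smul_eq_mul]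
  ring

theorem fmul_add_symbol (h₁ : Integrable fun ξ => m₁ ξ * 𝓕 g ξ)
    (h₂ : Integrable fun ξ => m₂ ξ * 𝓕 g ξ) : fmul (m₁ + m₂) g = fmul m₁ g + fmul m₂ g := by
  simp only [fmul, Pi.add_apply, add_mul]
  -- `𝓕⁻` on functions is `VectorFourier.fourierIntegral 𝐞 volume (-innerₗ V2)`
  exact VectorFourier.fourierIntegral_add Real.continuous_fourierChar
    (by simp only [LinearMap.neg_apply, innerₗ_apply_apply]; fun_prop) h₁ h₂

theorem fmul_neg_symbol : fmul (-m) g = -fmul m g := by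
  rw [← neg_one_smul ℂ m, fmul_smul_symbol, neg_one_smul]

theorem fmul_eq_zero_of_symbol_odd (A : V2 ≃ₗᵢ[ℝ] V2) (hm : m ∘ A = -m) (hg : g ∘ A = g)
    {x : V2} (hx : A x = x) : fmul m g x = 0 := by
  have h : fmul m g x = -fmul m g x := by
    conv_lhs => rw [← hx, fmul_comp_linearIsometryEquiv, hm, hg, fmul_neg_symbol]
    rfl
  exact CharZero.eq_neg_self_iff.mp h

end FourierMultiplier

def rieszSymbol (v ξ : V2) : ℂ := -Complex.I * ((⟪ξ, v⟫ / ‖ξ‖ : ℝ) : ℂ)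

theorem rz_eq_fmul_rieszSymbol (i : Fin 2) :
    rz i = fmul (rieszSymbol (EuclideanSpace.single i 1)) := by
  funext g
  unfold rz
  congr 2 with ξ
  simp [rieszSymbol, EuclideanSpace.inner_single_right]

theorem norm_rieszSymbol_le (v ξ : V2) : ‖rieszSymbol v ξ‖ ≤ ‖v‖ := by
  rw [rieszSymbol, norm_mul, norm_neg, Complex.norm_I, one_mul, Complex.norm_real, norm_div,
    norm_norm, Real.norm_eq_abs]
  rcases eq_or_ne ξ 0 with rfl | hξ
  · simp
  · rw [div_le_iff₀ (norm_pos_iff.mpr hξ), mul_comm]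
    exact abs_real_inner_le_norm ξ v

theorem rieszSymbol_comp_of_apply_eq_neg (A : V2 ≃ₗᵢ[ℝ] V2) {v : V2} (hv : A v = -v) :
    rieszSymbol v ∘ A = -rieszSymbol v := by
  ext ξ
  have h : ⟪A ξ, v⟫ = -⟪ξ, v⟫ := by
    rw [← A.inner_map_map ξ v, hv, inner_neg_right, neg_neg]
  simp [rieszSymbol, h, neg_div]

theorem rieszSymbol_eq_add (v : V2) :
    rieszSymbol v = (v 0 : ℂ) • rieszSymbol (EuclideanSpace.single 0 1)
      + (v 1 : ℂ) • rieszSymbol (EuclideanSpace.single 1 1) := by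
  ext ξ
  have hξ (i : Fin 2) : ⟪ξ, EuclideanSpace.single i 1⟫ = ξ i := by
    simp [EuclideanSpace.inner_single_right]
  have hv : ⟪ξ, v⟫ = v 0 * ξ 0 + v 1 * ξ 1 := by
    simp only [PiLp.inner_apply, Fin.sum_univ_two, RCLike.inner_apply, conj_trivial]
  simp only [rieszSymbol, Pi.add_apply, Pi.smul_apply, smul_eq_mul, hξ, hv]
  push_cast
  ring

theorem integrable_rieszSymbol_mul {g : V2 → ℂ} (hg : Integrable g) (v : V2) :
    Integrable fun ξ => rieszSymbol v ξ * g ξ :=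
  hg.bdd_mul (Complex.measurable_ofReal.comp ((measurable_id.inner measurable_const).div
    measurable_norm) |>.const_mul _).aestronglyMeasurable (.of_forall (norm_rieszSymbol_le v))

theorem fmul_rieszSymbol {g : V2 → ℂ} (hg : Integrable (𝓕 g)) (v : V2) :
    fmul (rieszSymbol v) g = (v 0 : ℂ) • rz 0 g + (v 1 : ℂ) • rz 1 g := by
  have hint (c : ℂ) (w : V2) : Integrable fun ξ => (c • rieszSymbol w) ξ * 𝓕 g ξ := by
    simpa only [Pi.smul_apply, smul_eq_mul, mul_assoc] using
      (integrable_rieszSymbol_mul hg w).const_mul c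
  rw [rieszSymbol_eq_add, fmul_add_symbol (hint (v 0) _) (hint (v 1) _), fmul_smul_symbol,
    fmul_smul_symbol, rz_eq_fmul_rieszSymbol, rz_eq_fmul_rieszSymbol]

theorem fderiv_apply_eq_pd (f : V2 → ℝ) (x v : V2) :
    fderiv ℝ f x v = v 0 * pd 0 f x + v 1 * pd 1 f x := by
  have hv : v = v 0 • EuclideanSpace.single 0 1 + v 1 • EuclideanSpace.single 1 1 := by
    ext i
    fin_cases i <;> simp
  conv_lhs => rw [hv]
  simp [pd]

theorem mul_rzR_add_mul_rzR_eq_zero {f : V2 → ℝ} (hf : Integrable (𝓕 fun y => (f y : ℂ)))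
    (A : V2 ≃ₗᵢ[ℝ] V2) (hfA : f ∘ A = f) {x p : V2} (hx : A x = x) (hp : A p = -p) :
    p 0 * rzR 0 f x + p 1 * rzR 1 f x = 0 := by
  have h := fmul_eq_zero_of_symbol_odd A (rieszSymbol_comp_of_apply_eq_neg A hp)
    (g := fun y => (f y : ℂ)) (funext fun y => congrArg _ (congrFun hfA y)) hx
  rw [fmul_rieszSymbol hf] at h
  simpa [rzR] using congrArg Complex.re h

theorem mul_sub_mul_eq_zero_of_orthogonal {p₀ p₁ a₀ a₁ b₀ b₁ : ℝ} (hp : p₀ ≠ 0 ∨ p₁ ≠ 0)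
    (ha : p₀ * a₀ + p₁ * a₁ = 0) (hb : p₀ * b₀ + p₁ * b₁ = 0) : a₁ * b₀ - a₀ * b₁ = 0 := by
  rcases hp with hp | hp
  · refine (mul_eq_zero.mp ?_).resolve_left hp
    linear_combination a₁ * hb - b₁ * ha
  · refine (mul_eq_zero.mp ?_).resolve_left hp
    linear_combination b₀ * ha - a₀ * hb

/-- for radially symmetric Schwartz `f`, the SQG nonlinearity vanishes:
`(R^⊥ f)·∇f = (R₂f)∂₁f - (R₁f)∂₂f = 0` pointwise on `ℝ²`. -/
theorem stmt5 (f : SchwartzMap V2 ℝ) (hrad : ∃ F : ℝ → ℝ, ∀ x : V2, f x = F ‖x‖) :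
    ∀ x : V2, udg (fun y => f y) (fun y => f y) x = 0 := by
  obtain ⟨F, hF⟩ := hrad
  intro x
  obtain ⟨p, A, hp, hAx, hAp⟩ :=
    exists_linearIsometryEquiv_apply_eq_self_and_neg (by simp) x
  have hfA : (fun y => f y) ∘ A = fun y => f y := comp_linearIsometryEquiv_eq_of_radial hF A
  have hR := mul_rzR_add_mul_rzR_eq_zero (integrable_fourier_ofReal f) A hfA hAx hAp
  have hD : p 0 * pd 0 (fun y => f y) x + p 1 * pd 1 (fun y => f y) x = 0 := by
    rw [← fderiv_apply_eq_pd]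
    exact fderiv_apply_eq_zero_of_comp_eq A.toContinuousLinearEquiv hfA hAx hAp
  have hp₀₁ : p 0 ≠ 0 ∨ p 1 ≠ 0 := by
    by_contra! h
    exact hp (by ext i; fin_cases i <;> simp [h.1, h.2])
  exact mul_sub_mul_eq_zero_of_orthogonal hp₀₁ hR hD
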